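/- The function B(H) = 8π·(1/(4H²−1) + (4H²/(4H²−1)^{3/2})·arctan(1/√(4H²−1))) is differentiable at every H ∈ (1/2, ∞), and its derivative B′(H) is strictly negative for every H > 1/2. -/

import Mathlib

/-! In the variable `u = 1 / √(4H² - 1)` the area is `8π (u² + (u³ + u) arctan u)`. This is
strictly increasing in `u > 0`, with derivative `3u + (3u² + 1) arctan u > 0`, while `u` is
strictly decreasing in `H > 1/2`; the chain rule makes `B'(H)` negative. -/

open Real Set

/-- Hsiang–Hsiang's formula for the area of the rotational CMC sphere of mean
curvature `H` in `H² × ℝ`. -/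
noncomputable def hsiangArea (H : ℝ) : ℝ :=
  8 * Real.pi * (1 / (4 * H ^ 2 - 1) +
    (4 * H ^ 2 / (4 * H ^ 2 - 1) ^ ((3 : ℝ) / 2)) *
      Real.arctan (1 / Real.sqrt (4 * H ^ 2 - 1)))

noncomputable def hsiangProfile (u : ℝ) : ℝ := u ^ 2 + (u ^ 3 + u) * arctan u

theorem hasDerivAt_hsiangProfile (u : ℝ) :
    HasDerivAt hsiangProfile (3 * u + (3 * u ^ 2 + 1) * arctan u) u := by
  refine ((hasDerivAt_pow 2 u).fun_add
    (((hasDerivAt_pow 3 u).fun_add (hasDerivAt_id' u)).fun_mul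
      (hasDerivAt_arctan u))).congr_deriv ?_
  field_simp
  ring

theorem hsiangArea_eq_hsiangProfile {H : ℝ} (hH : 0 < 4 * H ^ 2 - 1) :
    hsiangArea H = 8 * π * hsiangProfile (1 / √(4 * H ^ 2 - 1)) := by
  have hsq : √(4 * H ^ 2 - 1) ^ 2 = 4 * H ^ 2 - 1 := sq_sqrt hH.le
  rw [hsiangArea, hsiangProfile, rpow_div_two_eq_sqrt 3 hH.le, rpow_ofNat]
  set r := √(4 * H ^ 2 - 1)
  rw [← hsq, show 4 * H ^ 2 = r ^ 2 + 1 by linarith]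
  field_simp
  ring

theorem HasDerivAt.one_div_sqrt {f : ℝ → ℝ} {f' x : ℝ} (hf : HasDerivAt f f' x)
    (hx : 0 < f x) :
    HasDerivAt (fun y => 1 / √(f y)) (-f' / (2 * √(f x) ^ 3)) x := by
  have hr : 0 < √(f x) := sqrt_pos.2 hx
  refine ((hasDerivAt_const x (1 : ℝ)).fun_div (hf.sqrt hx.ne') hr.ne').congr_deriv ?_
  field_simp
  ring

/-- `B` is differentiable at every `H > 1/2` and `B'(H) < 0` there. -/
theorem hsiangArea_differentiable_deriv_neg :
    ∀ H : ℝ, 1 / 2 < H →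
      DifferentiableAt ℝ hsiangArea H ∧ deriv hsiangArea H < 0 := by
  intro H hH
  have hs : 0 < 4 * H ^ 2 - 1 := by nlinarith
  have hquad : HasDerivAt (fun x => 4 * x ^ 2 - 1) (8 * H) H :=
    (((hasDerivAt_pow 2 H).const_mul 4).sub_const 1).congr_deriv (by norm_num; ring)
  set r := √(4 * H ^ 2 - 1)
  set u := 1 / r
  have hB : HasDerivAt hsiangArea
      (8 * π * ((3 * u + (3 * u ^ 2 + 1) * arctan u) * (-(8 * H) / (2 * r ^ 3)))) H := by
    refine (((hasDerivAt_hsiangProfile u).comp H (hquad.one_div_sqrt hs)).const_mul _)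
      |>.congr_of_eventuallyEq ?_
    filter_upwards [continuousAt_const.eventually_lt hquad.continuousAt hs] with x hx
    exact hsiangArea_eq_hsiangProfile hx
  refine ⟨hB.differentiableAt, hB.deriv ▸ ?_⟩
  have hr : 0 < r := sqrt_pos.2 hs
  have hu : 0 < arctan u := arctan_pos.2 (by positivity)
  exact mul_neg_of_pos_of_neg (by positivity)
    (mul_neg_of_pos_of_neg (by positivity) (div_neg_of_neg_of_pos (by linarith) (by positivity)))
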